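/- Let φ, ψ ∈ G with ψ(t) ≤ C₁·φ(t) for all t ∈ (0,1] and some C₁ > 0. Then the following three conditions are equivalent: (1) lim_{t→0+} ψ(t)/φ(t) = 0; (2) the identity inclusion I : M(φ̃) → M(ψ̃) is disjointly strictly singular, i.e. there exist no sequence (x_n) of measurable functions with pairwise disjoint supports and 0 < ‖x_n‖_{M(φ̃)} < ∞, and no B > 0, such that ‖y‖_{M(φ̃)} ≤ B·‖y‖_{M(ψ̃)} for every y in the linear span of {x_n}; (3) there exist no sequence (x_n) of measurable functions with pairwise disjoint supports and 0 < ‖x_n‖_{M(φ̃)} < ∞, and no constant C₂ > 0, such that ‖x_n‖_{M(φ̃)} ≤ C₂·‖x_n‖_{M(ψ̃)} for all n. -/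

import Mathlib

open MeasureTheory Set Filter Topology
open scoped ENNReal

noncomputable section

/-- Lebesgue measure restricted to `[0,1]`. -/
def mu01 : MeasureTheory.Measure ℝ := MeasureTheory.volume.restrict (Set.Icc (0:ℝ) 1)

/-- Distribution function of `x` on `[0,1]`: `μ{s ∈ [0,1] : |x s| > τ}`. -/
def distr (x : ℝ → ℝ) (τ : ℝ) : ℝ≥0∞ :=
  MeasureTheory.volume {s ∈ Set.Icc (0:ℝ) 1 | τ < |x s|}

/-- Decreasing rearrangement of `x` (as a function on `(0,1]`):
`x*(t) = inf{τ ≥ 0 : μ{|x| > τ} ≤ t}`. -/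
def rearr (x : ℝ → ℝ) (t : ℝ) : ℝ :=
  sInf {τ : ℝ | 0 ≤ τ ∧ distr x τ ≤ ENNReal.ofReal t}

/-- Marcinkiewicz functional `‖x‖_{M(φ̃)} = sup_{0<t≤1} (φ(t)/t) ∫₀^t x*(s) ds`,
for `φ̃(t) = t/φ(t)`. -/
def marcNorm (φ : ℝ → ℝ) (x : ℝ → ℝ) : ℝ≥0∞ :=
  ⨆ t ∈ Set.Ioc (0:ℝ) 1,
    ENNReal.ofReal (φ t / t) * ∫⁻ s in Set.Ioc (0:ℝ) t, ENNReal.ofReal (rearr x s)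

/-- Failure of disjoint strict singularity for the identity inclusion of the space with
functional `NE` into the space with functional `NF`: there is a sequence of nonzero
measurable functions with pairwise disjoint supports such that `NE y ≤ B · NF y`
on their linear span. -/
def DSSFails (NE NF : (ℝ → ℝ) → ℝ≥0∞) : Prop :=
  ∃ (x : ℕ → ℝ → ℝ) (B : ℝ), 0 < B ∧
    (∀ n, Measurable (x n)) ∧
    (∀ n m, n ≠ m → ∀ᵐ s ∂mu01, x n s * x m s = 0) ∧
    (∀ n, 0 < NE (x n) ∧ NE (x n) < ⊤) ∧
    (∀ y ∈ Submodule.span ℝ (Set.range x), NE y ≤ ENNReal.ofReal B * NF y)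

lemma rearr_nonneg (x : ℝ → ℝ) (s : ℝ) : 0 ≤ rearr x s :=
  Real.sInf_nonneg fun _ hτ => hτ.1

lemma rearr_le {x : ℝ → ℝ} {τ s : ℝ} (hτ : 0 ≤ τ) (h : distr x τ ≤ ENNReal.ofReal s) :
    rearr x s ≤ τ :=
  csInf_le ⟨0, fun _ hy => hy.1⟩ ⟨hτ, h⟩

lemma le_rearr {x : ℝ → ℝ} {c s : ℝ} (τ₀ : ℝ) (hτ₀ : 0 ≤ τ₀)
    (h₀ : distr x τ₀ ≤ ENNReal.ofReal s)
    (h : ∀ τ, 0 ≤ τ → distr x τ ≤ ENNReal.ofReal s → c ≤ τ) : c ≤ rearr x s :=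
  le_csInf ⟨τ₀, hτ₀, h₀⟩ fun τ hτ => h τ hτ.1 hτ.2

lemma rearr_eq_zero {x : ℝ → ℝ} {s : ℝ} (h : distr x 0 ≤ ENNReal.ofReal s) :
    rearr x s = 0 :=
  le_antisymm (rearr_le le_rfl h) (rearr_nonneg x s)

lemma distr_mono_fun {x : ℝ → ℝ} {τ τ' : ℝ} (h : τ ≤ τ') : distr x τ' ≤ distr x τ :=
  measure_mono fun s hs => ⟨hs.1, lt_of_le_of_lt h hs.2⟩

lemma distr_eq_zero_of_bound {x : ℝ → ℝ} {τ : ℝ} (h : ∀ s ∈ Set.Icc (0:ℝ) 1, |x s| ≤ τ) :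
    distr x τ = 0 := by
  have : {s ∈ Set.Icc (0:ℝ) 1 | τ < |x s|} = ∅ := by
    ext s; simp only [mem_setOf_eq, mem_empty_iff_false, iff_false, not_and, not_lt]
    exact fun hs => h s hs
  rw [distr, this, measure_empty]

/-- quasi-concavity: for `0 < s ≤ t ≤ 1`, `φ t * s ≤ φ s * t`. -/
lemma ratio_mono (φ : ℝ → ℝ) (hpos : ∀ t ∈ Set.Ioc (0:ℝ) 1, 0 < φ t)
    (hconc : ConcaveOn ℝ (Set.Ioc (0:ℝ) 1) φ) {s t : ℝ}
    (hs : 0 < s) (hst : s ≤ t) (ht : t ≤ 1) : φ t * s ≤ φ s * t := by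
  rcases eq_or_lt_of_le hst with rfl | hlt
  · rw [mul_comm]
  have ht0 : (0:ℝ) < t := hs.trans hlt
  have hstep : ∀ u ∈ Set.Ioo (0:ℝ) s, φ t * ((s - u)/(t - u)) ≤ φ s := by
    rintro u ⟨hu0, hus⟩
    have hut : u < t := hus.trans hlt
    have htu : (0:ℝ) < t - u := by linarith
    have hb0 : 0 ≤ (s - u)/(t - u) := div_nonneg (by linarith) htu.le
    have hb1 : (s - u)/(t - u) ≤ 1 := (div_le_one htu).mpr (by linarith)
    have key := hconc.2 (Set.mem_Ioc.mpr ⟨hu0, by linarith⟩) (Set.mem_Ioc.mpr ⟨ht0, ht⟩)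
      (show (0:ℝ) ≤ 1 - (s-u)/(t-u) by linarith)
      (show (0:ℝ) ≤ (s-u)/(t-u) from hb0) (by ring)
    have hcomb : (1 - (s-u)/(t-u)) • u + ((s-u)/(t-u)) • t = s := by
      simp only [smul_eq_mul]
      field_simp
      ring
    rw [hcomb] at key
    have hφu : 0 < φ u := hpos u ⟨hu0, by linarith⟩
    have hnn : 0 ≤ (1 - (s-u)/(t-u)) * φ u := mul_nonneg (by linarith) hφu.le
    simp only [smul_eq_mul] at key
    linarith
  have htend : Filter.Tendsto (fun u => φ t * ((s - u)/(t - u)))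
      (nhdsWithin 0 (Set.Ioi 0)) (nhds (φ t * (s / t))) := by
    have hc : ContinuousAt (fun u : ℝ => φ t * ((s - u)/(t - u))) 0 := by
      apply ContinuousAt.mul continuousAt_const
      apply ContinuousAt.div (continuousAt_const.sub continuousAt_id)
        (continuousAt_const.sub continuousAt_id)
      simpa using ht0.ne'
    simpa using hc.tendsto.mono_left nhdsWithin_le_nhds
  have hle : φ t * (s / t) ≤ φ s :=
    le_of_tendsto htend (Filter.eventually_of_mem
      (Ioo_mem_nhdsGT_of_mem ⟨le_rfl, hs⟩) hstep)
  have h2 : φ t * (s / t) * t ≤ φ s * t := by nlinarith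
  calc φ t * s = φ t * (s / t) * t := by field_simp
  _ ≤ φ s * t := h2

lemma term_le_marcNorm (φ x : ℝ → ℝ) {t : ℝ} (ht : t ∈ Set.Ioc (0:ℝ) 1) :
    ENNReal.ofReal (φ t / t) * ∫⁻ s in Set.Ioc (0:ℝ) t, ENNReal.ofReal (rearr x s)
      ≤ marcNorm φ x :=
  le_iSup₂ (f := fun t (_ : t ∈ Set.Ioc (0:ℝ) 1) =>
    ENNReal.ofReal (φ t / t) * ∫⁻ s in Set.Ioc (0:ℝ) t, ENNReal.ofReal (rearr x s)) t ht

lemma marcNorm_le {φ x : ℝ → ℝ} {C : ℝ≥0∞}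
    (h : ∀ t ∈ Set.Ioc (0:ℝ) 1,
      ENNReal.ofReal (φ t / t) * ∫⁻ s in Set.Ioc (0:ℝ) t, ENNReal.ofReal (rearr x s) ≤ C) :
    marcNorm φ x ≤ C :=
  iSup₂_le h

lemma setLIntegral_le_const' {A : Set ℝ} (hA : MeasurableSet A) (f : ℝ → ℝ≥0∞) (c : ℝ≥0∞)
    (h : ∀ s ∈ A, f s ≤ c) : ∫⁻ s in A, f s ≤ c * MeasureTheory.volume A := by
  rw [← setLIntegral_const]
  exact lintegral_mono_ae ((ae_restrict_iff' hA).mpr (ae_of_all _ h))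

lemma setLIntegral_ge_const {A : Set ℝ} (hA : MeasurableSet A) (f : ℝ → ℝ≥0∞) (c : ℝ≥0∞)
    (h : ∀ s ∈ A, c ≤ f s) : c * MeasureTheory.volume A ≤ ∫⁻ s in A, f s := by
  rw [← setLIntegral_const]
  exact lintegral_mono_ae ((ae_restrict_iff' hA).mpr (ae_of_all _ h))

/-- If the support (within [0,1]) of `x` has measure at most `a`, the integral
of the rearrangement stops at `a`. -/
lemma lintegral_rearr_stop {x : ℝ → ℝ} {a t : ℝ} (ha : 0 ≤ a) (hat : a ≤ t)
    (hsupp : distr x 0 ≤ ENNReal.ofReal a) :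
    ∫⁻ s in Set.Ioc (0:ℝ) t, ENNReal.ofReal (rearr x s)
      = ∫⁻ s in Set.Ioc (0:ℝ) a, ENNReal.ofReal (rearr x s) := by
  have hsplit : Set.Ioc (0:ℝ) t = Set.Ioc 0 a ∪ Set.Ioc a t :=
    (Set.Ioc_union_Ioc_eq_Ioc ha hat).symm
  rw [hsplit, lintegral_union measurableSet_Ioc (Set.Ioc_disjoint_Ioc_of_le le_rfl)]
  have h0 : ∫⁻ s in Set.Ioc a t, ENNReal.ofReal (rearr x s) = 0 := by
    refine le_antisymm ?_ (zero_le)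
    have := setLIntegral_le_const' (measurableSet_Ioc (a := a) (b := t))
      (fun s => ENNReal.ofReal (rearr x s)) 0 ?_
    · simpa using this
    · intro s hs
      have : rearr x s = 0 :=
        rearr_eq_zero (hsupp.trans (ENNReal.ofReal_le_ofReal hs.1.le))
      simp [this]
  rw [h0, add_zero]

/-- Key estimate: if `ψ ≤ η φ` on `(0, a]` and the support of `x` has measure `≤ a`,
then `‖x‖_ψ ≤ η ‖x‖_φ`. -/
lemma small_support_bound (φ ψ : ℝ → ℝ)
    (hφpos : ∀ t ∈ Set.Ioc (0:ℝ) 1, 0 < φ t)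
    (hψpos : ∀ t ∈ Set.Ioc (0:ℝ) 1, 0 < ψ t)
    (hψconc : ConcaveOn ℝ (Set.Ioc (0:ℝ) 1) ψ)
    {η a : ℝ} (ha : a ∈ Set.Ioc (0:ℝ) 1) (hη : 0 ≤ η)
    (hr : ∀ u ∈ Set.Ioc (0:ℝ) a, ψ u ≤ η * φ u)
    (x : ℝ → ℝ) (hsupp : distr x 0 ≤ ENNReal.ofReal a) :
    marcNorm ψ x ≤ ENNReal.ofReal η * marcNorm φ x := by
  apply marcNorm_le
  intro t ht
  by_cases hta : t ≤ a
  · have h1 : ψ t / t ≤ η * (φ t / t) := by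
      rw [mul_div_assoc']
      exact (div_le_div_iff_of_pos_right ht.1).mpr (hr t ⟨ht.1, hta⟩)
    calc ENNReal.ofReal (ψ t / t) * ∫⁻ s in Set.Ioc (0:ℝ) t, ENNReal.ofReal (rearr x s)
        ≤ ENNReal.ofReal (η * (φ t / t)) *
            ∫⁻ s in Set.Ioc (0:ℝ) t, ENNReal.ofReal (rearr x s) :=
          mul_le_mul_left (ENNReal.ofReal_le_ofReal h1) _
      _ = ENNReal.ofReal η * (ENNReal.ofReal (φ t / t) *
            ∫⁻ s in Set.Ioc (0:ℝ) t, ENNReal.ofReal (rearr x s)) := by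
          rw [ENNReal.ofReal_mul hη, mul_assoc]
      _ ≤ ENNReal.ofReal η * marcNorm φ x :=
          mul_le_mul_right (term_le_marcNorm φ x ht) _
  · push_neg at hta
    have hstop := lintegral_rearr_stop ha.1.le hta.le hsupp (x := x)
    have h1 : ψ t / t ≤ η * (φ a / a) := by
      have hr1 : ψ t * a ≤ ψ a * t := ratio_mono ψ hψpos hψconc ha.1 hta.le ht.2
      have h2 : ψ t / t ≤ ψ a / a := (div_le_div_iff₀ ht.1 ha.1).mpr hr1
      refine h2.trans ?_
      rw [mul_div_assoc']
      exact (div_le_div_iff_of_pos_right ha.1).mpr (hr a ⟨ha.1, le_rfl⟩)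
    rw [hstop]
    calc ENNReal.ofReal (ψ t / t) * ∫⁻ s in Set.Ioc (0:ℝ) a, ENNReal.ofReal (rearr x s)
        ≤ ENNReal.ofReal (η * (φ a / a)) *
            ∫⁻ s in Set.Ioc (0:ℝ) a, ENNReal.ofReal (rearr x s) :=
          mul_le_mul_left (ENNReal.ofReal_le_ofReal h1) _
      _ = ENNReal.ofReal η * (ENNReal.ofReal (φ a / a) *
            ∫⁻ s in Set.Ioc (0:ℝ) a, ENNReal.ofReal (rearr x s)) := by
          rw [ENNReal.ofReal_mul hη, mul_assoc]
      _ ≤ ENNReal.ofReal η * marcNorm φ x :=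
          mul_le_mul_right (term_le_marcNorm φ x ha) _

/-- Pigeonhole: a.e.-disjointly supported functions can't all have support measure `> a`. -/
lemma exists_small_support (x : ℕ → ℝ → ℝ) (hmeas : ∀ n, Measurable (x n))
    (hdisj : ∀ n m, n ≠ m → ∀ᵐ s ∂mu01, x n s * x m s = 0)
    {a : ℝ} (ha : 0 < a) : ∃ n, distr (x n) 0 ≤ ENNReal.ofReal a := by
  by_contra hcon
  push_neg at hcon
  set S : ℕ → Set ℝ := fun n => Set.Icc (0:ℝ) 1 ∩ {s | x n s ≠ 0} with hS
  have hSmeas : ∀ n, MeasurableSet (S n) := fun n =>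
    measurableSet_Icc.inter ((hmeas n) (measurableSet_singleton 0).compl)
  have hdistr : ∀ n, distr (x n) 0 = MeasureTheory.volume (S n) := by
    intro n
    unfold distr
    congr 1
    ext s
    simp only [hS, abs_pos, Set.mem_setOf_eq, Set.mem_sep_iff, Set.mem_inter_iff]
  have hnull : ∀ n m, n ≠ m → MeasureTheory.volume (S n ∩ S m) = 0 := by
    intro n m hnm
    have h1 : mu01 {s | ¬ (x n s * x m s = 0)} = 0 := (hdisj n m hnm)
    have h2 : MeasureTheory.volume ({s | ¬ (x n s * x m s = 0)} ∩ Set.Icc (0:ℝ) 1) = 0 := by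
      rwa [mu01, MeasureTheory.Measure.restrict_apply' measurableSet_Icc] at h1
    refine measure_mono_null ?_ h2
    rintro s ⟨⟨hs1, hs2⟩, ⟨_, hs4⟩⟩
    exact ⟨mul_ne_zero hs2 hs4, hs1⟩
  have hclaim : ∀ N : ℕ, (N : ℝ≥0∞) * ENNReal.ofReal a
      ≤ MeasureTheory.volume (⋃ n ∈ Finset.range N, S n) := by
    intro N
    induction N with
    | zero => simp
    | succ N ih =>
      have hset : ⋃ n ∈ Finset.range (N+1), S n
          = S N ∪ ⋃ n ∈ Finset.range N, S n := by
        rw [Finset.range_add_one]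
        simp [Set.biUnion_insert]
      have hAmeas : MeasurableSet (⋃ n ∈ Finset.range N, S n) :=
        (Finset.range N).measurableSet_biUnion fun n _ => hSmeas n
      have hint : MeasureTheory.volume (S N ∩ ⋃ n ∈ Finset.range N, S n) = 0 := by
        have hsub : S N ∩ ⋃ n ∈ Finset.range N, S n ⊆ ⋃ n ∈ Set.Iio N, (S N ∩ S n) := by
          rintro s ⟨hs1, hs2⟩
          simp only [Set.mem_iUnion] at hs2 ⊢
          obtain ⟨n, hn, hsn⟩ := hs2
          exact ⟨n, Finset.mem_range.mp hn, hs1, hsn⟩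
        refine measure_mono_null hsub ((measure_biUnion_null_iff (Set.to_countable _)).mpr ?_)
        intro n hn
        exact hnull N n (Nat.ne_of_gt hn)
      have h1 : ENNReal.ofReal a ≤ MeasureTheory.volume (S N) := by
        rw [← hdistr N]; exact (hcon N).le
      have hsum : MeasureTheory.volume (S N ∪ ⋃ n ∈ Finset.range N, S n)
          = MeasureTheory.volume (S N) + MeasureTheory.volume (⋃ n ∈ Finset.range N, S n) := by
        have hm := measure_union_add_inter (μ := MeasureTheory.volume) (S N) hAmeas
        rw [hint, add_zero] at hm
        exact hm
      rw [hset, hsum]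
      push_cast
      calc ((N:ℝ≥0∞) + 1) * ENNReal.ofReal a
          = ENNReal.ofReal a + (N:ℝ≥0∞) * ENNReal.ofReal a := by ring
        _ ≤ _ := add_le_add h1 ih
  have hone : ∀ N : ℕ, (N : ℝ≥0∞) * ENNReal.ofReal a ≤ 1 := by
    intro N
    refine (hclaim N).trans ?_
    have : (⋃ n ∈ Finset.range N, S n) ⊆ Set.Icc (0:ℝ) 1 := by
      intro s hs
      simp only [Set.mem_iUnion] at hs
      obtain ⟨n, _, hn, _⟩ := hs
      exact hn
    calc MeasureTheory.volume (⋃ n ∈ Finset.range N, S n)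
        ≤ MeasureTheory.volume (Set.Icc (0:ℝ) 1) := measure_mono this
      _ = 1 := by rw [Real.volume_Icc]; norm_num
  have hN := hone (⌈1/a⌉₊ + 1)
  have hNa : ((⌈1/a⌉₊ + 1 : ℕ) : ℝ) * a ≤ 1 := by
    have h1 : ((⌈1/a⌉₊ + 1 : ℕ) : ℝ≥0∞) * ENNReal.ofReal a
        = ENNReal.ofReal (((⌈1/a⌉₊ + 1 : ℕ) : ℝ) * a) := by
      rw [ENNReal.ofReal_mul (by positivity), ENNReal.ofReal_natCast]
    rw [h1] at hN
    have := ENNReal.ofReal_le_ofReal_iff (p := ((⌈1/a⌉₊ + 1 : ℕ) : ℝ) * a) (q := 1)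
      (by norm_num)
    rw [← ENNReal.ofReal_one] at hN
    exact this.mp hN
  have hceil : (1:ℝ)/a ≤ (⌈1/a⌉₊ : ℝ) := Nat.le_ceil _
  have : ((⌈1/a⌉₊ + 1 : ℕ) : ℝ) = (⌈1/a⌉₊ : ℝ) + 1 := by push_cast; ring
  rw [this] at hNa
  have h4 : (1/a) * a = 1 := by field_simp
  nlinarith [mul_le_mul_of_nonneg_right hceil ha.le]

/-- Direction (i): if `ψ/φ → 0` at `0⁺`, there is no disjoint sequence with termwise
comparable norms. -/
lemma no_termwise_of_tendsto (φ ψ : ℝ → ℝ)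
    (hφpos : ∀ t ∈ Set.Ioc (0:ℝ) 1, 0 < φ t)
    (hψpos : ∀ t ∈ Set.Ioc (0:ℝ) 1, 0 < ψ t)
    (hψconc : ConcaveOn ℝ (Set.Ioc (0:ℝ) 1) ψ)
    (hlim : Filter.Tendsto (fun t => ψ t / φ t) (nhdsWithin 0 (Set.Ioi 0)) (nhds 0)) :
    ¬ ∃ (x : ℕ → ℝ → ℝ) (C₂ : ℝ), 0 < C₂ ∧
        (∀ n, Measurable (x n)) ∧
        (∀ n m, n ≠ m → ∀ᵐ s ∂mu01, x n s * x m s = 0) ∧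
        (∀ n, 0 < marcNorm φ (x n) ∧ marcNorm φ (x n) < ⊤) ∧
        (∀ n, marcNorm φ (x n) ≤ ENNReal.ofReal C₂ * marcNorm ψ (x n)) := by
  rintro ⟨x, C₂, hC₂, hmeas, hdisj, hnorm, hcomp⟩
  set η : ℝ := 1 / (2 * C₂) with hη_def
  have hη : 0 < η := by positivity
  have hev : ∀ᶠ u in nhdsWithin 0 (Set.Ioi 0), dist (ψ u / φ u) 0 < η :=
    Metric.tendsto_nhds.mp hlim η hη
  obtain ⟨δ, hδ, hball⟩ := Metric.mem_nhdsWithin_iff.mp hev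
  set a : ℝ := min (δ/2) 1 with ha_def
  have ha0 : 0 < a := lt_min (by positivity) one_pos
  have ha1 : a ≤ 1 := min_le_right _ _
  have haδ : a < δ := lt_of_le_of_lt (min_le_left _ _) (by linarith)
  have hr : ∀ u ∈ Set.Ioc (0:ℝ) a, ψ u ≤ η * φ u := by
    rintro u ⟨hu0, hua⟩
    have hu1 : u ≤ 1 := hua.trans ha1
    have hφu : 0 < φ u := hφpos u ⟨hu0, hu1⟩
    have humem : u ∈ Metric.ball (0:ℝ) δ ∩ Set.Ioi 0 := by
      constructor
      · rw [Metric.mem_ball, Real.dist_eq, sub_zero, abs_of_pos hu0]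
        exact lt_of_le_of_lt hua haδ
      · exact hu0
    have hd := hball humem
    simp only [Set.mem_setOf_eq, Real.dist_eq, sub_zero] at hd
    have : ψ u / φ u < η := lt_of_le_of_lt (le_abs_self _) hd
    have := (div_lt_iff₀ hφu).mp this
    linarith
  obtain ⟨n, hn⟩ := exists_small_support x hmeas hdisj ha0
  have hb := small_support_bound φ ψ hφpos hψpos hψconc ⟨ha0, ha1⟩ hη.le hr (x n) hn
  have hkey : marcNorm φ (x n) ≤ ENNReal.ofReal (1/2) * marcNorm φ (x n) := by
    calc marcNorm φ (x n) ≤ ENNReal.ofReal C₂ * marcNorm ψ (x n) := hcomp n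
      _ ≤ ENNReal.ofReal C₂ * (ENNReal.ofReal η * marcNorm φ (x n)) :=
          mul_le_mul_right hb _
      _ = ENNReal.ofReal (C₂ * η) * marcNorm φ (x n) := by
          rw [ENNReal.ofReal_mul hC₂.le, mul_assoc]
      _ = ENNReal.ofReal (1/2) * marcNorm φ (x n) := by
          congr 2
          rw [hη_def]
          field_simp
  obtain ⟨hpos, hfin⟩ := hnorm n
  have hfin2 : ENNReal.ofReal (1/2) * marcNorm φ (x n) ≠ ⊤ :=
    ENNReal.mul_ne_top ENNReal.ofReal_ne_top hfin.ne
  have htr := ENNReal.toReal_mono hfin2 hkey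
  rw [ENNReal.toReal_mul, ENNReal.toReal_ofReal (by norm_num)] at htr
  have htp : 0 < (marcNorm φ (x n)).toReal :=
    ENNReal.toReal_pos hpos.ne' hfin.ne
  linarith

def indFn (p q : ℝ) : ℝ → ℝ := (Set.Ioc p q).indicator (fun _ => 1)

lemma indFn_meas (p q : ℝ) : Measurable (indFn p q) :=
  measurable_const.indicator measurableSet_Ioc

lemma indFn_abs_le (p q : ℝ) (s : ℝ) : |indFn p q s| ≤ 1 := by
  unfold indFn Set.indicator
  split <;> simp

lemma indFn_of_mem {p q s : ℝ} (h : s ∈ Set.Ioc p q) : indFn p q s = 1 := by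
  simp [indFn, Set.indicator_of_mem h]

lemma indFn_of_not_mem {p q s : ℝ} (h : s ∉ Set.Ioc p q) : indFn p q s = 0 := by
  simp [indFn, Set.indicator_of_notMem h]

lemma indFn_ne_zero {p q s : ℝ} (h : indFn p q s ≠ 0) : s ∈ Set.Ioc p q := by
  by_contra hc
  exact h (indFn_of_not_mem hc)

lemma indFn_mul_eq_zero {p q p' q' : ℝ} (h : q' ≤ p ∨ q ≤ p') (s : ℝ) :
    indFn p q s * indFn p' q' s = 0 := by
  by_cases h1 : s ∈ Set.Ioc p q
  · by_cases h2 : s ∈ Set.Ioc p' q'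
    · exfalso
      rcases h with h | h
      · have := h1.1; have := h2.2; linarith
      · have := h2.1; have := h1.2; linarith
    · rw [indFn_of_not_mem h2, mul_zero]
  · rw [indFn_of_not_mem h1, zero_mul]

lemma marc_ind_le (φ : ℝ → ℝ) (hφm : MonotoneOn φ (Set.Ioc (0:ℝ) 1))
    (hφpos : ∀ t ∈ Set.Ioc (0:ℝ) 1, 0 < φ t)
    {p q : ℝ} : marcNorm φ (indFn p q) ≤ ENNReal.ofReal (φ 1) := by
  apply marcNorm_le
  intro u hu
  have h1 : ∀ s ∈ Set.Ioc (0:ℝ) u, ENNReal.ofReal (rearr (indFn p q) s) ≤ 1 := by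
    intro s hs
    refine ENNReal.ofReal_le_one.mpr (rearr_le one_pos.le ?_)
    rw [distr_eq_zero_of_bound fun s' _ => indFn_abs_le p q s']
    exact zero_le
  calc ENNReal.ofReal (φ u / u) * ∫⁻ s in Set.Ioc (0:ℝ) u, ENNReal.ofReal (rearr (indFn p q) s)
      ≤ ENNReal.ofReal (φ u / u) * (1 * MeasureTheory.volume (Set.Ioc (0:ℝ) u)) :=
        mul_le_mul_right (setLIntegral_le_const' measurableSet_Ioc _ 1 h1) _
    _ = ENNReal.ofReal (φ u / u) * ENNReal.ofReal u := by
        rw [one_mul, Real.volume_Ioc, sub_zero]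
    _ = ENNReal.ofReal (φ u / u * u) := (ENNReal.ofReal_mul (div_nonneg (hφpos u hu).le hu.1.le)).symm
    _ = ENNReal.ofReal (φ u) := by rw [div_mul_cancel₀ _ hu.1.ne']
    _ ≤ ENNReal.ofReal (φ 1) := ENNReal.ofReal_le_ofReal (hφm hu ⟨one_pos, le_rfl⟩ hu.2)

lemma le_marc_ind (φ : ℝ → ℝ) (hφ1 : 0 ≤ φ 1)
    {p q : ℝ} (hp : 0 ≤ p) (hpq : p < q) (hq : q ≤ 1) :
    ENNReal.ofReal (φ 1 * (q - p)) ≤ marcNorm φ (indFn p q) := by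
  have hqp : 0 < q - p := by linarith
  have hrearr : ∀ s ∈ Set.Ioo (0:ℝ) (q - p), (1:ℝ) ≤ rearr (indFn p q) s := by
    rintro s ⟨hs0, hs1⟩
    refine le_rearr 1 one_pos.le ?_ ?_
    · rw [distr_eq_zero_of_bound fun s' _ => indFn_abs_le p q s']
      exact zero_le
    · intro τ hτ0 hτ
      by_contra hτ1
      push_neg at hτ1
      have hsub : Set.Ioc p q ⊆ {s' ∈ Set.Icc (0:ℝ) 1 | τ < |indFn p q s'|} := by
        intro s' hs'
        refine ⟨⟨hp.trans hs'.1.le, hs'.2.trans hq⟩, ?_⟩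
        rw [indFn_of_mem hs']
        simpa using hτ1
      have h2 : ENNReal.ofReal (q - p) ≤ distr (indFn p q) τ := by
        calc ENNReal.ofReal (q - p) = MeasureTheory.volume (Set.Ioc p q) := by
              rw [Real.volume_Ioc]
          _ ≤ _ := measure_mono hsub
      have h3 : ENNReal.ofReal (q - p) ≤ ENNReal.ofReal s := h2.trans hτ
      rw [ENNReal.ofReal_le_ofReal_iff (by linarith)] at h3
      linarith
  have hint : ENNReal.ofReal (q - p) ≤
      ∫⁻ s in Set.Ioc (0:ℝ) 1, ENNReal.ofReal (rearr (indFn p q) s) := by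
    calc ENNReal.ofReal (q - p) = 1 * MeasureTheory.volume (Set.Ioo (0:ℝ) (q-p)) := by
          rw [one_mul, Real.volume_Ioo, sub_zero]
      _ ≤ ∫⁻ s in Set.Ioo (0:ℝ) (q-p), ENNReal.ofReal (rearr (indFn p q) s) :=
          setLIntegral_ge_const measurableSet_Ioo _ 1 fun s hs => by
            simpa using ENNReal.one_le_ofReal.mpr (hrearr s hs)
      _ ≤ _ := lintegral_mono_set (fun s hs => by
            rcases Set.mem_Ioo.mp hs with ⟨h1', h2'⟩
            exact Set.mem_Ioc.mpr ⟨h1', by linarith⟩)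
  calc ENNReal.ofReal (φ 1 * (q - p)) = ENNReal.ofReal (φ 1 / 1) * ENNReal.ofReal (q - p) := by
        rw [← ENNReal.ofReal_mul (by simpa using hφ1), div_one]
    _ ≤ ENNReal.ofReal (φ 1 / 1) * ∫⁻ s in Set.Ioc (0:ℝ) 1,
          ENNReal.ofReal (rearr (indFn p q) s) := mul_le_mul_right hint _
    _ ≤ marcNorm φ (indFn p q) := term_le_marcNorm φ _ ⟨one_pos, le_rfl⟩

/-- Case A: if `u/φ(u)` is bounded below, the inclusion estimate holds globally. -/
lemma global_bound (φ ψ : ℝ → ℝ)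
    (hφpos : ∀ t ∈ Set.Ioc (0:ℝ) 1, 0 < φ t)
    (hψpos : ∀ t ∈ Set.Ioc (0:ℝ) 1, 0 < ψ t)
    {τ : ℝ} (hτ : 0 < τ) (hA : ∀ u ∈ Set.Ioc (0:ℝ) 1, τ * φ u ≤ u) (y : ℝ → ℝ) :
    marcNorm φ y ≤ ENNReal.ofReal (1 / (τ * ψ 1)) * marcNorm ψ y := by
  have hψ1 : 0 < ψ 1 := hψpos 1 ⟨one_pos, le_rfl⟩
  apply marcNorm_le
  intro t ht
  have h1 : φ t / t ≤ 1 / τ := by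
    have h2 := hA t ht
    have hφt := hφpos t ht
    rw [div_le_div_iff₀ ht.1 hτ]
    linarith [hA t ht]
  have hprod : ENNReal.ofReal (1/τ) = ENNReal.ofReal (1/(τ * ψ 1)) * ENNReal.ofReal (ψ 1 / 1) := by
    rw [← ENNReal.ofReal_mul (by positivity)]
    congr 1
    field_simp
  calc ENNReal.ofReal (φ t / t) * ∫⁻ s in Set.Ioc (0:ℝ) t, ENNReal.ofReal (rearr y s)
      ≤ ENNReal.ofReal (1/τ) * ∫⁻ s in Set.Ioc (0:ℝ) 1, ENNReal.ofReal (rearr y s) :=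
        mul_le_mul' (ENNReal.ofReal_le_ofReal h1)
          (lintegral_mono_set (Set.Ioc_subset_Ioc le_rfl ht.2))
    _ = ENNReal.ofReal (1/(τ * ψ 1)) * (ENNReal.ofReal (ψ 1 / 1) *
          ∫⁻ s in Set.Ioc (0:ℝ) 1, ENNReal.ofReal (rearr y s)) := by
        rw [hprod, mul_assoc]
    _ ≤ ENNReal.ofReal (1/(τ * ψ 1)) * marcNorm ψ y :=
        mul_le_mul_right (term_le_marcNorm ψ y ⟨one_pos, le_rfl⟩) _

lemma marcNorm_of_zero (φ : ℝ → ℝ) {y : ℝ → ℝ} (h : ∀ s, y s = 0) : marcNorm φ y = 0 := by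
  refine le_antisymm (marcNorm_le fun u hu => ?_) (zero_le)
  have h0 : distr y 0 = 0 := distr_eq_zero_of_bound fun s _ => by simp [h s]
  have hb : ∀ s ∈ Set.Ioc (0:ℝ) u, ENNReal.ofReal (rearr y s) ≤ 0 := fun s _ => by
    rw [rearr_eq_zero (by rw [h0]; exact zero_le)]; simp
  have hint := setLIntegral_le_const' measurableSet_Ioc _ 0 hb
  rw [zero_mul] at hint
  calc ENNReal.ofReal (φ u / u) * ∫⁻ s in Set.Ioc (0:ℝ) u, ENNReal.ofReal (rearr y s)
      ≤ ENNReal.ofReal (φ u / u) * 0 := mul_le_mul_right hint _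
    _ = 0 := mul_zero _

lemma span_norm_bound (φ ψ : ℝ → ℝ)
    (hφm : MonotoneOn φ (Set.Ioc (0:ℝ) 1))
    (hφpos : ∀ t ∈ Set.Ioc (0:ℝ) 1, 0 < φ t)
    (hφconc : ConcaveOn ℝ (Set.Ioc (0:ℝ) 1) φ)
    (hψpos : ∀ t ∈ Set.Ioc (0:ℝ) 1, 0 < ψ t)
    (hψconc : ConcaveOn ℝ (Set.Ioc (0:ℝ) 1) ψ)
    {ε : ℝ} (hε : 0 < ε)
    (t : ℕ → ℝ) (hp : ∀ k, 0 < t k) (h1 : ∀ k, t k ≤ 1)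
    (hhalf : ∀ k, t (k+1) ≤ t k / 2)
    (hratio : ∀ k, 2 * (t (k+1) / φ (t (k+1))) ≤ t k / φ (t k))
    (hεφ : ∀ k, ε * φ (t k) ≤ ψ (t k))
    (c : ℕ →₀ ℝ) (y : ℝ → ℝ)
    (hy : ∀ s, y s = ∑ i ∈ c.support, c i * indFn (t (i+1)) (t i) s) :
    marcNorm φ y ≤ ENNReal.ofReal (6/ε) * marcNorm ψ y := by
  classical
  have htIoc : ∀ k, t k ∈ Set.Ioc (0:ℝ) 1 := fun k => ⟨hp k, h1 k⟩
  have hφt : ∀ k, 0 < φ (t k) := fun k => hφpos _ (htIoc k)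
  rcases c.support.eq_empty_or_nonempty with hemp | hne
  · have hy0 : ∀ s, y s = 0 := by intro s; rw [hy s, hemp, Finset.sum_empty]
    rw [marcNorm_of_zero φ hy0]; exact zero_le
  have hmono : ∀ i j, i ≤ j → t j ≤ t i := by
    intro i j hij
    induction hij with
    | refl => exact le_rfl
    | @step m _ ih => exact le_trans (le_trans (hhalf m) (by linarith [hp m])) ih
  have hgeo : ∀ k i, t (k+i) / φ (t (k+i)) ≤ (1/2)^i * (t k / φ (t k)) := by
    intro k i
    induction i with
    | zero => simp
    | succ i ih =>
      have h2 := hratio (k+i)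
      have h3 : t (k+(i+1)) / φ (t (k+(i+1))) ≤ (1/2) * (t (k+i) / φ (t (k+i))) := by
        have he : k+(i+1) = (k+i)+1 := by omega
        rw [he]; linarith
      have h4 : (1/2) * (t (k+i) / φ (t (k+i))) ≤ (1/2) * ((1/2)^i * (t k / φ (t k))) := by
        have := mul_le_mul_of_nonneg_left ih (by norm_num : (0:ℝ) ≤ 1/2)
        linarith
      calc t (k+(i+1)) / φ (t (k+(i+1))) ≤ (1/2) * ((1/2)^i * (t k / φ (t k))) := h3.trans h4
        _ = (1/2)^(i+1) * (t k / φ (t k)) := by ring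
  have hdecay : ∀ s : ℝ, 0 < s → ∃ k, t k < s := by
    intro s hs
    have hbound : ∀ k, t k ≤ t 0 / 2^k := by
      intro k
      induction k with
      | zero => simp
      | succ k ih =>
        have := hhalf k
        have h5 : t k / 2 ≤ (t 0 / 2^k) / 2 := by linarith
        calc t (k+1) ≤ t k / 2 := hhalf k
          _ ≤ (t 0 / 2^k) / 2 := h5
          _ = t 0 / 2^(k+1) := by rw [pow_succ]; ring
    obtain ⟨k, hk⟩ := pow_unbounded_of_one_lt (t 0 / s) (one_lt_two (α := ℝ))
    refine ⟨k, lt_of_le_of_lt (hbound k) ?_⟩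
    rw [div_lt_iff₀ (by positivity : (0:ℝ) < 2^k)]
    rw [div_lt_iff₀ hs] at hk
    linarith
  -- the maximum weighted coefficient
  set M : ℝ := c.support.sup' hne (fun k => |c k| * φ (t k)) with hMdef
  obtain ⟨k₀, hk₀mem, hk₀eq⟩ := Finset.exists_mem_eq_sup' hne (fun k => |c k| * φ (t k))
  have hM : M = |c k₀| * φ (t k₀) := hk₀eq
  have hM0 : 0 ≤ M := by rw [hM]; exact mul_nonneg (abs_nonneg _) (hφt k₀).le
  have hcM : ∀ j, |c j| * φ (t j) ≤ M := by
    intro j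
    by_cases hj : j ∈ c.support
    · rw [hMdef]; exact Finset.le_sup' (fun k => |c k| * φ (t k)) hj
    · rw [Finsupp.notMem_support_iff.mp hj]; simpa using hM0
  have hcM' : ∀ j, |c j| ≤ M / φ (t j) := fun j => (le_div_iff₀ (hφt j)).mpr (hcM j)
  set τ₀ : ℝ := ∑ i ∈ c.support, |c i| with hτ₀def
  have hτ₀0 : 0 ≤ τ₀ := Finset.sum_nonneg fun i _ => abs_nonneg _
  have hyb : ∀ s, |y s| ≤ τ₀ := by
    intro s
    rw [hy]
    refine (Finset.abs_sum_le_sum_abs _ _).trans (Finset.sum_le_sum fun i _ => ?_)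
    rw [abs_mul]
    exact mul_le_of_le_one_right (abs_nonneg _) (indFn_abs_le _ _ s)
  have hyval : ∀ j s, s ∈ Set.Ioc (t (j+1)) (t j) → y s = c j := by
    intro j s hs
    rw [hy, Finset.sum_eq_single j, indFn_of_mem hs, mul_one]
    · intro b _ hbj
      refine mul_eq_zero_of_right _ (indFn_of_not_mem fun hmem => ?_)
      rcases lt_or_gt_of_ne hbj with hb | hb
      · have h6 : t j ≤ t (b+1) := hmono (b+1) j (by omega)
        have := hmem.1; have := hs.2; linarith
      · have h6 : t b ≤ t (j+1) := hmono (j+1) b (by omega)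
        have := hmem.2; have := hs.1; linarith
    · intro hj
      rw [Finsupp.notMem_support_iff.mp hj, zero_mul]
  have hy_ne : ∀ s, y s ≠ 0 → ∃ i, s ∈ Set.Ioc (t (i+1)) (t i) := by
    intro s hsne
    by_contra hcon
    push_neg at hcon
    exact hsne (by
      rw [hy]
      exact Finset.sum_eq_zero fun i _ => mul_eq_zero_of_right _ (indFn_of_not_mem (hcon i)))
  have hsupp0 : distr y 0 ≤ ENNReal.ofReal (t 0) := by
    have hsub : {s ∈ Set.Icc (0:ℝ) 1 | 0 < |y s|} ⊆ Set.Ioc 0 (t 0) := by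
      rintro s ⟨_, hs2⟩
      obtain ⟨i, hsi⟩ := hy_ne s (abs_pos.mp hs2)
      exact ⟨lt_trans (hp (i+1)) hsi.1, hsi.2.trans (hmono 0 i (by omega))⟩
    calc distr y 0 ≤ MeasureTheory.volume (Set.Ioc (0:ℝ) (t 0)) := measure_mono hsub
      _ = ENNReal.ofReal (t 0) := by rw [Real.volume_Ioc, sub_zero]
  have hrle : ∀ j s, t (j+1) ≤ s → rearr y s ≤ M / φ (t j) := by
    intro j s hjs
    refine rearr_le (div_nonneg hM0 (hφt j).le) ?_
    have hsub : {s' ∈ Set.Icc (0:ℝ) 1 | M / φ (t j) < |y s'|} ⊆ Set.Ioc 0 (t (j+1)) := by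
      rintro s' ⟨_, hs'2⟩
      have hyne : y s' ≠ 0 := by
        intro h0
        rw [h0, abs_zero] at hs'2
        exact absurd hs'2 (not_lt.mpr (div_nonneg hM0 (hφt j).le))
      obtain ⟨i, hsi⟩ := hy_ne s' hyne
      rw [hyval i s' hsi] at hs'2
      have hij : j + 1 ≤ i := by
        by_contra hcon
        push_neg at hcon
        have h7 : φ (t j) ≤ φ (t i) := hφm (htIoc j) (htIoc i) (hmono i j (by omega))
        have h8 : M / φ (t i) ≤ M / φ (t j) := by
          rw [div_le_div_iff₀ (hφt i) (hφt j)]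
          exact mul_le_mul_of_nonneg_left h7 hM0
        have := hcM' i
        linarith
      exact ⟨lt_trans (hp (i+1)) hsi.1, hsi.2.trans (hmono (j+1) i hij)⟩
    calc distr y (M / φ (t j)) ≤ MeasureTheory.volume (Set.Ioc (0:ℝ) (t (j+1))) :=
          measure_mono hsub
      _ = ENNReal.ofReal (t (j+1)) := by rw [Real.volume_Ioc, sub_zero]
      _ ≤ ENNReal.ofReal s := ENNReal.ofReal_le_ofReal hjs
  have hIk : ∀ k, ∫⁻ s in Set.Ioc (0:ℝ) (t k), ENNReal.ofReal (rearr y s)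
      ≤ ENNReal.ofReal (2 * (M * (t k / φ (t k)))) := by
    intro k
    have hcover : Set.Ioc (0:ℝ) (t k) ⊆ ⋃ i : ℕ, Set.Ioc (t (k+i+1)) (t (k+i)) := by
      rintro s ⟨hs0, hsk⟩
      have hex : ∃ i, t (k+i+1) < s := by
        obtain ⟨m, hm⟩ := hdecay s hs0
        exact ⟨m, lt_of_le_of_lt (hmono m (k+m+1) (by omega)) hm⟩
      have hi1 : t (k + Nat.find hex + 1) < s := Nat.find_spec hex
      have hi2 : s ≤ t (k + Nat.find hex) := by
        rcases Nat.eq_zero_or_pos (Nat.find hex) with h0 | hpos'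
        · rw [h0]; simpa using hsk
        · have hmin := Nat.find_min hex (m := Nat.find hex - 1) (by omega)
          push_neg at hmin
          have he : k + (Nat.find hex - 1) + 1 = k + Nat.find hex := by omega
          rwa [he] at hmin
      exact Set.mem_iUnion.mpr ⟨Nat.find hex, hi1, hi2⟩
    have hterm : ∀ i : ℕ, ∫⁻ s in Set.Ioc (t (k+i+1)) (t (k+i)), ENNReal.ofReal (rearr y s)
        ≤ ENNReal.ofReal (M * (t k / φ (t k))) * (ENNReal.ofReal (1/2))^i := by
      intro i
      have hstep1 : ∫⁻ s in Set.Ioc (t (k+i+1)) (t (k+i)), ENNReal.ofReal (rearr y s)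
          ≤ ENNReal.ofReal (M / φ (t (k+i))) * MeasureTheory.volume (Set.Ioc (t (k+i+1)) (t (k+i))) := by
        refine setLIntegral_le_const' measurableSet_Ioc _ _ fun s hs => ?_
        exact ENNReal.ofReal_le_ofReal (hrle (k+i) s hs.1.le)
      have hreal : (M / φ (t (k+i))) * (t (k+i) - t (k+i+1)) ≤ (M * (t k / φ (t k))) * (1/2)^i := by
        have hd1 : (M / φ (t (k+i))) * (t (k+i) - t (k+i+1)) ≤ (M / φ (t (k+i))) * t (k+i) := by
          have := hp (k+i+1)
          have hnn : 0 ≤ M / φ (t (k+i)) := div_nonneg hM0 (hφt _).le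
          nlinarith
        have hd2 : (M / φ (t (k+i))) * t (k+i) = M * (t (k+i) / φ (t (k+i))) := by ring
        have hd3 : M * (t (k+i) / φ (t (k+i))) ≤ M * ((1/2)^i * (t k / φ (t k))) :=
          mul_le_mul_of_nonneg_left (hgeo k i) hM0
        calc (M / φ (t (k+i))) * (t (k+i) - t (k+i+1)) ≤ M * (t (k+i) / φ (t (k+i))) := by
              rw [← hd2]; exact hd1
          _ ≤ M * ((1/2)^i * (t k / φ (t k))) := hd3
          _ = (M * (t k / φ (t k))) * (1/2)^i := by ring
      calc ∫⁻ s in Set.Ioc (t (k+i+1)) (t (k+i)), ENNReal.ofReal (rearr y s)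
          ≤ ENNReal.ofReal (M / φ (t (k+i))) * ENNReal.ofReal (t (k+i) - t (k+i+1)) := by
            rw [Real.volume_Ioc] at hstep1; exact hstep1
        _ = ENNReal.ofReal ((M / φ (t (k+i))) * (t (k+i) - t (k+i+1))) :=
            (ENNReal.ofReal_mul (div_nonneg hM0 (hφt _).le)).symm
        _ ≤ ENNReal.ofReal ((M * (t k / φ (t k))) * (1/2)^i) := ENNReal.ofReal_le_ofReal hreal
        _ = ENNReal.ofReal (M * (t k / φ (t k))) * (ENNReal.ofReal (1/2))^i := by
            rw [ENNReal.ofReal_mul (mul_nonneg hM0 (div_nonneg (hp k).le (hφt k).le)),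
              ENNReal.ofReal_pow (by norm_num)]
    have hhalfE : ENNReal.ofReal (1/2 : ℝ) = 2⁻¹ := by
      rw [one_div, ENNReal.ofReal_inv_of_pos two_pos, ENNReal.ofReal_ofNat]
    calc ∫⁻ s in Set.Ioc (0:ℝ) (t k), ENNReal.ofReal (rearr y s)
        ≤ ∫⁻ s in ⋃ i : ℕ, Set.Ioc (t (k+i+1)) (t (k+i)), ENNReal.ofReal (rearr y s) :=
          lintegral_mono_set hcover
      _ ≤ ∑' i : ℕ, ∫⁻ s in Set.Ioc (t (k+i+1)) (t (k+i)), ENNReal.ofReal (rearr y s) :=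
          lintegral_iUnion_le _ _
      _ ≤ ∑' i : ℕ, ENNReal.ofReal (M * (t k / φ (t k))) * (ENNReal.ofReal (1/2))^i :=
          ENNReal.tsum_le_tsum hterm
      _ = ENNReal.ofReal (M * (t k / φ (t k))) * (1 - ENNReal.ofReal (1/2))⁻¹ := by
          rw [ENNReal.tsum_mul_left, ENNReal.tsum_geometric]
      _ = ENNReal.ofReal (M * (t k / φ (t k))) * 2 := by
          rw [hhalfE, ENNReal.one_sub_inv_two, inv_inv]
      _ = ENNReal.ofReal (2 * (M * (t k / φ (t k)))) := by
          rw [mul_comm (ENNReal.ofReal _) 2, ← ENNReal.ofReal_ofNat 2,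
            ← ENNReal.ofReal_mul (by norm_num)]
  -- upper bound : ‖y‖_φ ≤ 3M
  have hupper : marcNorm φ y ≤ ENNReal.ofReal (3 * M) := by
    apply marcNorm_le
    intro u hu
    rcases le_or_gt (t 0) u with h0u | hu0
    · rw [lintegral_rearr_stop (hp 0).le h0u hsupp0]
      have hr1 : φ u / u ≤ φ (t 0) / t 0 := by
        rw [div_le_div_iff₀ hu.1 (hp 0)]
        exact ratio_mono φ hφpos hφconc (hp 0) h0u hu.2
      have heq : (φ (t 0) / t 0) * (2 * (M * (t 0 / φ (t 0)))) = 2 * M := by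
        field_simp [(hφt 0).ne', (hp 0).ne']
      calc ENNReal.ofReal (φ u / u) * ∫⁻ s in Set.Ioc (0:ℝ) (t 0), ENNReal.ofReal (rearr y s)
          ≤ ENNReal.ofReal (φ (t 0) / t 0) * ENNReal.ofReal (2 * (M * (t 0 / φ (t 0)))) :=
            mul_le_mul' (ENNReal.ofReal_le_ofReal hr1) (hIk 0)
        _ = ENNReal.ofReal ((φ (t 0) / t 0) * (2 * (M * (t 0 / φ (t 0))))) :=
            (ENNReal.ofReal_mul (div_nonneg (hφt 0).le (hp 0).le)).symm
        _ = ENNReal.ofReal (2 * M) := by rw [heq]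
        _ ≤ ENNReal.ofReal (3 * M) := ENNReal.ofReal_le_ofReal (by linarith)
    · have hex : ∃ j, t (j+1) < u := by
        obtain ⟨m, hm⟩ := hdecay u hu.1
        exact ⟨m, lt_of_le_of_lt (hmono m (m+1) (by omega)) hm⟩
      have hj1 : t (Nat.find hex + 1) < u := Nat.find_spec hex
      have hj2 : u ≤ t (Nat.find hex) := by
        rcases Nat.eq_zero_or_pos (Nat.find hex) with h0 | hpos'
        · rw [h0]; exact hu0.le
        · have hmin := Nat.find_min hex (m := Nat.find hex - 1) (by omega)
          push_neg at hmin
          have he : Nat.find hex - 1 + 1 = Nat.find hex := by omega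
          rwa [he] at hmin
      set j := Nat.find hex
      have hsplit : Set.Ioc (0:ℝ) u = Set.Ioc 0 (t (j+1)) ∪ Set.Ioc (t (j+1)) u :=
        (Set.Ioc_union_Ioc_eq_Ioc (hp (j+1)).le hj1.le).symm
      rw [hsplit, lintegral_union measurableSet_Ioc (Set.Ioc_disjoint_Ioc_of_le le_rfl), mul_add]
      have hA : ENNReal.ofReal (φ u / u) *
          ∫⁻ s in Set.Ioc (0:ℝ) (t (j+1)), ENNReal.ofReal (rearr y s)
          ≤ ENNReal.ofReal (2 * M) := by
        have hr1 : φ u / u ≤ φ (t (j+1)) / t (j+1) := by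
          rw [div_le_div_iff₀ hu.1 (hp (j+1))]
          exact ratio_mono φ hφpos hφconc (hp (j+1)) hj1.le hu.2
        have heq : (φ (t (j+1)) / t (j+1)) * (2 * (M * (t (j+1) / φ (t (j+1))))) = 2 * M := by
          field_simp [(hφt (j+1)).ne', (hp (j+1)).ne']
        calc ENNReal.ofReal (φ u / u) *
            ∫⁻ s in Set.Ioc (0:ℝ) (t (j+1)), ENNReal.ofReal (rearr y s)
            ≤ ENNReal.ofReal (φ (t (j+1)) / t (j+1)) *
              ENNReal.ofReal (2 * (M * (t (j+1) / φ (t (j+1))))) :=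
              mul_le_mul' (ENNReal.ofReal_le_ofReal hr1) (hIk (j+1))
          _ = ENNReal.ofReal ((φ (t (j+1)) / t (j+1)) * (2 * (M * (t (j+1) / φ (t (j+1)))))) :=
              (ENNReal.ofReal_mul (div_nonneg (hφt (j+1)).le (hp (j+1)).le)).symm
          _ = ENNReal.ofReal (2 * M) := by rw [heq]
      have hB : ENNReal.ofReal (φ u / u) *
          ∫⁻ s in Set.Ioc (t (j+1)) u, ENNReal.ofReal (rearr y s)
          ≤ ENNReal.ofReal M := by
        have hint : ∫⁻ s in Set.Ioc (t (j+1)) u, ENNReal.ofReal (rearr y s)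
            ≤ ENNReal.ofReal (M / φ (t j)) * ENNReal.ofReal (u - t (j+1)) := by
          have := setLIntegral_le_const' (measurableSet_Ioc (a := t (j+1)) (b := u))
            (fun s => ENNReal.ofReal (rearr y s)) (ENNReal.ofReal (M / φ (t j)))
            (fun s hs => ENNReal.ofReal_le_ofReal (hrle j s hs.1.le))
          rwa [Real.volume_Ioc] at this
        have hreal : (φ u / u) * ((M / φ (t j)) * (u - t (j+1))) ≤ M := by
          have hφu : 0 < φ u := hφpos u hu
          have hφuj : φ u ≤ φ (t j) := hφm hu (htIoc j) hj2
          have h9 : (φ u / u) * ((M / φ (t j)) * (u - t (j+1)))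
              ≤ (φ u / u) * ((M / φ (t j)) * u) := by
            have hnn : 0 ≤ (φ u / u) * (M / φ (t j)) :=
              mul_nonneg (div_nonneg hφu.le hu.1.le) (div_nonneg hM0 (hφt j).le)
            nlinarith [hp (j+1)]
          have h10 : (φ u / u) * ((M / φ (t j)) * u) = M * (φ u / φ (t j)) := by
            field_simp [(hφt j).ne', hu.1.ne']
          have h11 : M * (φ u / φ (t j)) ≤ M := by
            have : φ u / φ (t j) ≤ 1 := (div_le_one (hφt j)).mpr hφuj
            nlinarith
          linarith
        calc ENNReal.ofReal (φ u / u) *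
            ∫⁻ s in Set.Ioc (t (j+1)) u, ENNReal.ofReal (rearr y s)
            ≤ ENNReal.ofReal (φ u / u) *
              (ENNReal.ofReal (M / φ (t j)) * ENNReal.ofReal (u - t (j+1))) :=
              mul_le_mul_right hint _
          _ = ENNReal.ofReal ((φ u / u) * ((M / φ (t j)) * (u - t (j+1)))) := by
              rw [← ENNReal.ofReal_mul (div_nonneg hM0 (hφt j).le),
                ← ENNReal.ofReal_mul (div_nonneg (hφpos u hu).le hu.1.le)]
          _ ≤ ENNReal.ofReal M := ENNReal.ofReal_le_ofReal hreal
      calc ENNReal.ofReal (φ u / u) *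
            (∫⁻ s in Set.Ioc (0:ℝ) (t (j+1)), ENNReal.ofReal (rearr y s)) +
          ENNReal.ofReal (φ u / u) *
            (∫⁻ s in Set.Ioc (t (j+1)) u, ENNReal.ofReal (rearr y s))
          ≤ ENNReal.ofReal (2 * M) + ENNReal.ofReal M := add_le_add hA hB
        _ = ENNReal.ofReal (3 * M) := by
            rw [← ENNReal.ofReal_add (by linarith) hM0]
            norm_num
            ring_nf
            rw [ENNReal.ofReal_mul' (by norm_num), ENNReal.ofReal_ofNat]
  -- lower bound : (ε/2) M ≤ ‖y‖_ψ
  have hlow : ENNReal.ofReal (ε/2 * M) ≤ marcNorm ψ y := by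
    set a : ℝ := t k₀ - t (k₀+1) with hadef
    have hhalf0 := hhalf k₀
    have ha0 : 0 < a := by rw [hadef]; have := hp k₀; linarith
    have haup : a ≤ t k₀ := by rw [hadef]; have := hp (k₀+1); linarith
    have ha1 : a ≤ 1 := haup.trans (h1 k₀)
    have hahalf : t k₀ / 2 ≤ a := by rw [hadef]; linarith
    have hra : ∀ s ∈ Set.Ioo (0:ℝ) a, |c k₀| ≤ rearr y s := by
      rintro s ⟨hs0, hsa⟩
      refine le_rearr τ₀ hτ₀0 ?_ ?_
      · rw [distr_eq_zero_of_bound fun s' _ => hyb s']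
        exact zero_le
      · intro τ hτ0 hτ
        by_contra hτc
        push_neg at hτc
        have hsub : Set.Ioc (t (k₀+1)) (t k₀) ⊆ {s' ∈ Set.Icc (0:ℝ) 1 | τ < |y s'|} := by
          intro s' hs'
          refine ⟨⟨(hp (k₀+1)).le.trans hs'.1.le, hs'.2.trans (h1 k₀)⟩, ?_⟩
          rw [hyval k₀ s' hs']
          exact hτc
        have h12 : ENNReal.ofReal a ≤ distr y τ := by
          calc ENNReal.ofReal a = MeasureTheory.volume (Set.Ioc (t (k₀+1)) (t k₀)) := by
                rw [Real.volume_Ioc, hadef]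
            _ ≤ _ := measure_mono hsub
        have h13 := (h12.trans hτ)
        rw [ENNReal.ofReal_le_ofReal_iff hs0.le] at h13
        linarith
    have hint : ENNReal.ofReal |c k₀| * ENNReal.ofReal a ≤
        ∫⁻ s in Set.Ioc (0:ℝ) a, ENNReal.ofReal (rearr y s) := by
      calc ENNReal.ofReal |c k₀| * ENNReal.ofReal a
          = ENNReal.ofReal |c k₀| * MeasureTheory.volume (Set.Ioo (0:ℝ) a) := by
            rw [Real.volume_Ioo, sub_zero]
        _ ≤ ∫⁻ s in Set.Ioo (0:ℝ) a, ENNReal.ofReal (rearr y s) :=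
            setLIntegral_ge_const measurableSet_Ioo _ _
              (fun s hs => ENNReal.ofReal_le_ofReal (hra s hs))
        _ ≤ _ := lintegral_mono_set Set.Ioo_subset_Ioc_self
    have hψa : 0 < ψ a := hψpos a ⟨ha0, ha1⟩
    have hεψ : ε/2 * M ≤ ψ a * |c k₀| := by
      have hr2 : ψ (t k₀) * a ≤ ψ a * t k₀ :=
        ratio_mono ψ hψpos hψconc ha0 haup (h1 k₀)
      have hψk : 0 < ψ (t k₀) := hψpos _ (htIoc k₀)
      have h14 : ψ (t k₀) / 2 ≤ ψ a := by
        have h15 : ψ (t k₀) * (t k₀ / 2) ≤ ψ (t k₀) * a :=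
          mul_le_mul_of_nonneg_left hahalf hψk.le
        have h16 : ψ (t k₀) * (t k₀ / 2) ≤ ψ a * t k₀ := h15.trans hr2
        have := hp k₀
        nlinarith
      have h17 : ε/2 * φ (t k₀) ≤ ψ a := by
        have := hεφ k₀
        linarith
      rw [hM]
      nlinarith [abs_nonneg (c k₀)]
    calc ENNReal.ofReal (ε/2 * M) ≤ ENNReal.ofReal (ψ a * |c k₀|) :=
          ENNReal.ofReal_le_ofReal hεψ
      _ = ENNReal.ofReal (ψ a / a) * (ENNReal.ofReal |c k₀| * ENNReal.ofReal a) := by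
          rw [← ENNReal.ofReal_mul (abs_nonneg _), ← ENNReal.ofReal_mul (div_nonneg hψa.le ha0.le)]
          congr 1
          field_simp
      _ ≤ ENNReal.ofReal (ψ a / a) * ∫⁻ s in Set.Ioc (0:ℝ) a, ENNReal.ofReal (rearr y s) :=
          mul_le_mul_right hint _
      _ ≤ marcNorm ψ y := term_le_marcNorm ψ y ⟨ha0, ha1⟩
  calc marcNorm φ y ≤ ENNReal.ofReal (3 * M) := hupper
    _ = ENNReal.ofReal ((6/ε) * (ε/2 * M)) := by
        congr 1
        field_simp
        ring
    _ = ENNReal.ofReal (6/ε) * ENNReal.ofReal (ε/2 * M) :=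
        ENNReal.ofReal_mul (by positivity)
    _ ≤ ENNReal.ofReal (6/ε) * marcNorm ψ y := mul_le_mul_right hlow _

lemma DSS_of_not_tendsto (φ ψ : ℝ → ℝ)
    (hφm : MonotoneOn φ (Set.Ioc (0:ℝ) 1))
    (hφpos : ∀ t ∈ Set.Ioc (0:ℝ) 1, 0 < φ t)
    (hφconc : ConcaveOn ℝ (Set.Ioc (0:ℝ) 1) φ)
    (hψm : MonotoneOn ψ (Set.Ioc (0:ℝ) 1))
    (hψpos : ∀ t ∈ Set.Ioc (0:ℝ) 1, 0 < ψ t)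
    (hψconc : ConcaveOn ℝ (Set.Ioc (0:ℝ) 1) ψ)
    (hnlim : ¬ Filter.Tendsto (fun t => ψ t / φ t) (nhdsWithin 0 (Set.Ioi 0)) (nhds 0)) :
    DSSFails (marcNorm φ) (marcNorm ψ) := by
  classical
  have hφ1 : 0 < φ 1 := hφpos 1 ⟨one_pos, le_rfl⟩
  have hψ1 : 0 < ψ 1 := hψpos 1 ⟨one_pos, le_rfl⟩
  by_cases hcase : ∃ τ, 0 < τ ∧ ∀ u ∈ Set.Ioc (0:ℝ) 1, τ * φ u ≤ u
  · -- Case A: global comparability; any disjoint sequence works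
    obtain ⟨τ, hτ, hA⟩ := hcase
    refine ⟨fun n => indFn (1/(n+2 : ℝ)) (1/(n+1 : ℝ)), 1/(τ * ψ 1), by positivity,
      fun n => indFn_meas _ _, ?_, ?_, ?_⟩
    · intro n m hnm
      refine Filter.Eventually.of_forall fun s => ?_
      rcases hnm.lt_or_gt with h | h
      · refine indFn_mul_eq_zero (Or.inl ?_) s
        apply one_div_le_one_div_of_le (by positivity)
        have : (n:ℝ) + 1 ≤ m := by exact_mod_cast h
        push_cast; linarith
      · refine indFn_mul_eq_zero (Or.inr ?_) s
        apply one_div_le_one_div_of_le (by positivity)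
        have : (m:ℝ) + 1 ≤ n := by exact_mod_cast h
        push_cast; linarith
    · intro n
      have hplt : (1:ℝ)/(n+2) < 1/(n+1) := by
        apply one_div_lt_one_div_of_lt (by positivity)
        push_cast; linarith
      constructor
      · refine lt_of_lt_of_le ?_ (le_marc_ind φ hφ1.le (by positivity) hplt (by
          rw [div_le_one (by positivity)]; push_cast; linarith))
        apply ENNReal.ofReal_pos.mpr
        have : (0:ℝ) < 1/(n+1) - 1/(n+2) := by linarith
        positivity
      · exact lt_of_le_of_lt (marc_ind_le φ hφm hφpos) ENNReal.ofReal_lt_top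
    · intro y _
      exact global_bound φ ψ hφpos hψpos hτ hA y
  · -- Case B: construct the lacunary sequence
    push_neg at hcase
    -- extract ε from failure of the limit
    rw [Metric.tendsto_nhds] at hnlim
    push_neg at hnlim
    obtain ⟨ε, hε, hfreq⟩ := hnlim
    have hsel : ∀ δ : ℝ, 0 < δ → ∃ u, 0 < u ∧ u < δ ∧ u ≤ 1 ∧ ε * φ u ≤ ψ u := by
      intro δ hδ
      have hmem : Set.Ioo (0:ℝ) (min δ 1) ∈ nhdsWithin (0:ℝ) (Set.Ioi 0) :=
        Ioo_mem_nhdsGT_of_mem ⟨le_rfl, lt_min hδ one_pos⟩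
      obtain ⟨u, hu1, hu2⟩ := (hfreq.and_eventually (Filter.eventually_of_mem hmem fun u hu => hu)).exists
      have hu0 : 0 < u := hu2.1
      have huδ : u < δ := lt_of_lt_of_le hu2.2 (min_le_left _ _)
      have hu1' : u ≤ 1 := (lt_of_lt_of_le hu2.2 (min_le_right _ _)).le
      have hφu : 0 < φ u := hφpos u ⟨hu0, hu1'⟩
      have hψu : 0 < ψ u := hψpos u ⟨hu0, hu1'⟩
      rw [Real.dist_eq, sub_zero] at hu1
      have habs : ε ≤ ψ u / φ u := by
        rwa [abs_of_pos (div_pos hψu hφu)] at hu1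
      exact ⟨u, hu0, huδ, hu1', (le_div_iff₀ hφu).mp habs⟩
    -- the recursion step
    have hstep : ∀ p : ℝ, (0 < p ∧ p ≤ 1 ∧ ε * φ p ≤ ψ p) →
        ∃ q, (0 < q ∧ q ≤ 1 ∧ ε * φ q ≤ ψ q) ∧ q ≤ p/2 ∧
          2 * (q / φ q) ≤ p / φ p := by
      rintro p ⟨hp0, hp1, _⟩
      have hφp : 0 < φ p := hφpos p ⟨hp0, hp1⟩
      obtain ⟨u, hu, huu⟩ := hcase ((1/2) * (p / φ p)) (by positivity)
      have hφu : 0 < φ u := hφpos u hu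
      have huφ : u / φ u < (1/2) * (p / φ p) := by
        rw [div_lt_iff₀ hφu]; linarith
      obtain ⟨q, hq0, hqlt, hq1, hqε⟩ := hsel (min u (p/2)) (lt_min hu.1 (by positivity))
      have hqu : q ≤ u := (lt_of_lt_of_le hqlt (min_le_left _ _)).le
      have hqp2 : q ≤ p/2 := (lt_of_lt_of_le hqlt (min_le_right _ _)).le
      have hqφ : q / φ q ≤ u / φ u := by
        rw [div_le_div_iff₀ (hφpos q ⟨hq0, hq1⟩) hφu]
        have := ratio_mono φ hφpos hφconc hq0 hqu hu.2
        linarith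
      exact ⟨q, ⟨hq0, hq1, hqε⟩, hqp2, by linarith⟩
    obtain ⟨t₁, ht₁0, _, ht₁1, ht₁ε⟩ := hsel 1 one_pos
    choose! f hf1 hf2 hf3 using hstep
    let T : ℕ → {p : ℝ // 0 < p ∧ p ≤ 1 ∧ ε * φ p ≤ ψ p} :=
      fun n => Nat.rec ⟨t₁, ht₁0, ht₁1, ht₁ε⟩ (fun _ prev => ⟨f prev.1, hf1 prev.1 prev.2⟩) n
    let t : ℕ → ℝ := fun n => (T n).1
    have hG : ∀ n, 0 < t n ∧ t n ≤ 1 ∧ ε * φ (t n) ≤ ψ (t n) := fun n => (T n).2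
    have hsucc : ∀ n, t (n+1) = f (t n) := fun n => rfl
    have hhalf : ∀ n, t (n+1) ≤ t n / 2 := fun n => by
      rw [hsucc n]; exact hf2 (t n) (hG n)
    have hratio : ∀ n, 2 * (t (n+1) / φ (t (n+1))) ≤ t n / φ (t n) := fun n => by
      rw [hsucc n]; exact hf3 (t n) (hG n)
    have hmono : ∀ i j, i ≤ j → t j ≤ t i := by
      intro i j hij
      induction hij with
      | refl => exact le_rfl
      | @step m _ ih => exact le_trans (le_trans (hhalf m) (by linarith [(hG m).1])) ih
    have htlt : ∀ k, t (k+1) < t k := fun k =>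
      lt_of_le_of_lt (hhalf k) (by linarith [(hG k).1])
    refine ⟨fun k => indFn (t (k+1)) (t k), 6/ε, by positivity, fun k => indFn_meas _ _,
      ?_, ?_, ?_⟩
    · intro n m hnm
      refine Filter.Eventually.of_forall fun s => ?_
      rcases hnm.lt_or_gt with h | h
      · exact indFn_mul_eq_zero (Or.inl (hmono (n+1) m (by omega))) s
      · exact indFn_mul_eq_zero (Or.inr (hmono (m+1) n (by omega))) s
    · intro k
      constructor
      · refine lt_of_lt_of_le ?_
          (le_marc_ind φ hφ1.le (hG (k+1)).1.le (htlt k) (hG k).2.1)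
        exact ENNReal.ofReal_pos.mpr (mul_pos hφ1 (by linarith [htlt k]))
      · exact lt_of_le_of_lt (marc_ind_le φ hφm hφpos) ENNReal.ofReal_lt_top
    · intro y hy
      rw [Finsupp.mem_span_range_iff_exists_finsupp] at hy
      obtain ⟨c, hc⟩ := hy
      refine span_norm_bound φ ψ hφm hφpos hφconc hψpos hψconc hε t
        (fun k => (hG k).1) (fun k => (hG k).2.1) hhalf hratio (fun k => (hG k).2.2) c y ?_
      intro s
      rw [← hc]
      simp only [Finsupp.sum, Finset.sum_apply, Pi.smul_apply, smul_eq_mul]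

/-- **Corollary 2.** For `φ, ψ ∈ G` with `ψ ≤ C₁ φ` on `(0,1]`, condition (A) is equivalent to
disjoint strict singularity of `I : M(φ̃) → M(ψ̃)`, and also to the nonexistence of a disjoint
sequence on which the two Marcinkiewicz norms are comparable termwise. -/
theorem marcinkiewicz_into_marcinkiewicz_DSS_iff
    (φ ψ : ℝ → ℝ)
    (hφm : MonotoneOn φ (Set.Ioc (0:ℝ) 1)) (hφpos : ∀ t ∈ Set.Ioc (0:ℝ) 1, 0 < φ t)
    (hφconc : ConcaveOn ℝ (Set.Ioc (0:ℝ) 1) φ)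
    (hψm : MonotoneOn ψ (Set.Ioc (0:ℝ) 1)) (hψpos : ∀ t ∈ Set.Ioc (0:ℝ) 1, 0 < ψ t)
    (hψconc : ConcaveOn ℝ (Set.Ioc (0:ℝ) 1) ψ)
    (C₁ : ℝ) (hC₁ : 0 < C₁) (hle : ∀ t ∈ Set.Ioc (0:ℝ) 1, ψ t ≤ C₁ * φ t) :
    (Filter.Tendsto (fun t => ψ t / φ t) (nhdsWithin 0 (Set.Ioi 0)) (nhds 0)
      ↔ ¬ DSSFails (marcNorm φ) (marcNorm ψ)) ∧
    (Filter.Tendsto (fun t => ψ t / φ t) (nhdsWithin 0 (Set.Ioi 0)) (nhds 0)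
      ↔ ¬ ∃ (x : ℕ → ℝ → ℝ) (C₂ : ℝ), 0 < C₂ ∧
          (∀ n, Measurable (x n)) ∧
          (∀ n m, n ≠ m → ∀ᵐ s ∂mu01, x n s * x m s = 0) ∧
          (∀ n, 0 < marcNorm φ (x n) ∧ marcNorm φ (x n) < ⊤) ∧
          (∀ n, marcNorm φ (x n) ≤ ENNReal.ofReal C₂ * marcNorm ψ (x n))) := by
  have hDSS_to_term : DSSFails (marcNorm φ) (marcNorm ψ) →
      ∃ (x : ℕ → ℝ → ℝ) (C₂ : ℝ), 0 < C₂ ∧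
        (∀ n, Measurable (x n)) ∧
        (∀ n m, n ≠ m → ∀ᵐ s ∂mu01, x n s * x m s = 0) ∧
        (∀ n, 0 < marcNorm φ (x n) ∧ marcNorm φ (x n) < ⊤) ∧
        (∀ n, marcNorm φ (x n) ≤ ENNReal.ofReal C₂ * marcNorm ψ (x n)) := by
    rintro ⟨x, B, hB, hmeas, hdisj, hnorm, hspan⟩
    exact ⟨x, B, hB, hmeas, hdisj, hnorm,
      fun n => hspan (x n) (Submodule.subset_span ⟨n, rfl⟩)⟩
  constructor
  · constructor
    · intro hlim hD
      exact no_termwise_of_tendsto φ ψ hφpos hψpos hψconc hlim (hDSS_to_term hD)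
    · intro hnD
      by_contra hlim
      exact hnD (DSS_of_not_tendsto φ ψ hφm hφpos hφconc hψm hψpos hψconc hlim)
  · constructor
    · exact fun hlim => no_termwise_of_tendsto φ ψ hφpos hψpos hψconc hlim
    · intro hnT
      by_contra hlim
      exact hnT (hDSS_to_term
        (DSS_of_not_tendsto φ ψ hφm hφpos hφconc hψm hψpos hψconc hlim))
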